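/- An OWA mechanism satisfies proportional fairness if and only if w_j = 1/n for every j, i.e., if and only if it is the standard average mechanism. -/

import Mathlib

/-!
For the average, `|x i - avg x| ≤ (∑ j, |x i - x j|) / n`; the summands with `j ∈ S` are at most
the spread `r` of `S` and the other `n - #S` summands are at most `1`.

Conversely, let the mechanism see the monotone 0/1 profile with `k` zeros followed by `n - k` ones.
Its value is the tail sum `∑_{j ≥ k} w j`, and fairness towards the coalition of the zeros and
towards that of the ones (both of spread `0`) pins this value to `(n - k) / n`. Consecutive
differences of the tail sums then give `w j = 1 / n`.
-/

noncomputable def owa {n : ℕ} (w x : Fin n → ℝ) : ℝ :=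
  ∑ j, w j * x (Tuple.sort x j)

open Finset

def ProportionallyFair {n : ℕ} (f : (Fin n → ℝ) → ℝ) : Prop :=
  ∀ x : Fin n → ℝ, (∀ j, x j ∈ Set.Icc (0:ℝ) 1) →
    ∀ S : Finset (Fin n), ∀ hS : S.Nonempty, ∀ i ∈ S,
      |x i - f x| ≤ 1 - (#S : ℝ) / n + (S.sup' hS x - S.inf' hS x)

section owa

variable {n : ℕ}

theorem owa_of_monotone (w : Fin n → ℝ) {x : Fin n → ℝ} (hx : Monotone x) :
    owa w x = ∑ j, w j * x j := by
  simp [owa, Tuple.sort_eq_refl_iff_monotone.mpr hx]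

theorem owa_const_weights (c : ℝ) (x : Fin n → ℝ) : owa (fun _ => c) x = c * ∑ j, x j := by
  rw [owa, ← mul_sum, Equiv.sum_comp (Tuple.sort x) x]

end owa

theorem abs_sub_le_sup'_sub_inf' {ι : Type*} {S : Finset ι} (hS : S.Nonempty) (x : ι → ℝ)
    {i j : ι} (hi : i ∈ S) (hj : j ∈ S) : |x i - x j| ≤ S.sup' hS x - S.inf' hS x :=
  abs_sub_le_iff.mpr
    ⟨by linarith [le_sup' x hi, inf'_le x hj], by linarith [le_sup' x hj, inf'_le x hi]⟩

theorem abs_sub_average_le {n : ℕ} {x : Fin n → ℝ} (hx : ∀ j, x j ∈ Set.Icc (0:ℝ) 1)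
    {S : Finset (Fin n)} (hS : S.Nonempty) {i : Fin n} (hi : i ∈ S) :
    |x i - (∑ j, x j) / n| ≤ 1 - (#S : ℝ) / n + (S.sup' hS x - S.inf' hS x) := by
  set r := S.sup' hS x - S.inf' hS x
  have hn : (0 : ℝ) < n := Nat.cast_pos.mpr (Fin.pos i)
  have hSn : #S ≤ n := card_le_univ S |>.trans_eq (Fintype.card_fin n)
  have hr : 0 ≤ r := (abs_nonneg _).trans (abs_sub_le_sup'_sub_inf' hS x hi hi)
  have hinside : ∑ j ∈ S, |x i - x j| ≤ #S * r := by
    simpa using sum_le_card_nsmul S _ r fun j hj => abs_sub_le_sup'_sub_inf' hS x hi hj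
  have houtside : ∑ j ∈ Sᶜ, |x i - x j| ≤ n - #S := by
    have := sum_le_card_nsmul Sᶜ _ 1 fun j _ =>
      abs_sub_le_of_nonneg_of_le (hx i).1 (hx i).2 (hx j).1 (hx j).2
    rwa [card_compl, Fintype.card_fin, nsmul_one, Nat.cast_sub hSn] at this
  have hcentre : x i - (∑ j, x j) / n = (∑ j, (x i - x j)) / n := by
    rw [sum_sub_distrib, sum_const, card_univ, Fintype.card_fin, nsmul_eq_mul]
    field_simp
  calc |x i - (∑ j, x j) / n| = |∑ j, (x i - x j)| / n := by
        rw [hcentre, abs_div, abs_of_pos hn]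
    _ ≤ (∑ j ∈ S, |x i - x j| + ∑ j ∈ Sᶜ, |x i - x j|) / n := by
        rw [sum_add_sum_compl]; gcongr; exact abs_sum_le_sum_abs _ _
    _ ≤ (#S * r + (n - #S)) / n := by gcongr
    _ = 1 - (#S : ℝ) / n + #S / n * r := by field_simp; ring
    _ ≤ 1 - (#S : ℝ) / n + r := by
        gcongr
        exact mul_le_of_le_one_left hr (div_le_one_of_le₀ (mod_cast hSn) hn.le)

theorem Fin.card_filter_le_val {n k : ℕ} (hk : k ≤ n) : #{j : Fin n | k ≤ (j : ℕ)} = n - k := by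
  have := card_filter_add_card_filter_not (s := univ) fun j : Fin n => (j : ℕ) < k
  simp only [not_lt, card_univ, Fintype.card_fin, Fin.card_filter_val_lt, min_eq_right hk] at this
  omega

section stepProfile

variable {n : ℕ}

def stepProfile (n k : ℕ) : Fin n → ℝ := fun j => if k ≤ (j : ℕ) then 1 else 0

theorem stepProfile_mem_Icc (k : ℕ) (j : Fin n) : stepProfile n k j ∈ Set.Icc (0:ℝ) 1 := by
  unfold stepProfile; split_ifs <;> norm_num

theorem monotone_stepProfile (k : ℕ) : Monotone (stepProfile n k) := by
  intro a b (hab : (a : ℕ) ≤ b)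
  unfold stepProfile
  split_ifs <;> norm_num; omega

theorem stepProfile_self : stepProfile n n = 0 :=
  funext fun j => if_neg j.is_lt.not_ge

theorem stepProfile_sub_stepProfile_succ (j : Fin n) :
    stepProfile n j - stepProfile n (j + 1) = Pi.single j 1 := by
  funext i
  simp only [stepProfile, Pi.sub_apply, Pi.single_apply, Fin.ext_iff]
  split_ifs <;> norm_num <;> omega

theorem owa_stepProfile_sub_owa_stepProfile_succ (w : Fin n → ℝ) (j : Fin n) :
    owa w (stepProfile n j) - owa w (stepProfile n (j + 1)) = w j := by
  rw [owa_of_monotone w (monotone_stepProfile _), owa_of_monotone w (monotone_stepProfile _),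
    ← sum_sub_distrib]
  simp [← mul_sub, ← Pi.sub_apply, stepProfile_sub_stepProfile_succ, Pi.single_apply]

end stepProfile

namespace ProportionallyFair

variable {n : ℕ}

theorem abs_sub_le_of_eqOn {f : (Fin n → ℝ) → ℝ} (hf : ProportionallyFair f) {x : Fin n → ℝ}
    (hx : ∀ j, x j ∈ Set.Icc (0:ℝ) 1) {S : Finset (Fin n)} (hS : S.Nonempty) {c : ℝ}
    (hc : ∀ j ∈ S, x j = c) : |c - f x| ≤ 1 - (#S : ℝ) / n := by
  obtain ⟨i, hi⟩ := hS
  have hsup : S.sup' ⟨i, hi⟩ x = c := sup'_eq_of_forall _ _ hc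
  have hinf : S.inf' ⟨i, hi⟩ x = c := inf'_eq_of_forall _ _ hc
  simpa [hsup, hinf, hc i hi] using hf x hx S ⟨i, hi⟩ i hi

theorem abs_one_sub_owa_stepProfile_le {w : Fin n → ℝ} (hf : ProportionallyFair (owa w))
    {k : ℕ} (hk : k < n) : |1 - owa w (stepProfile n k)| ≤ k / n := by
  have hn : (n : ℝ) ≠ 0 := by exact_mod_cast (k.zero_le.trans_lt hk).ne'
  have := hf.abs_sub_le_of_eqOn (stepProfile_mem_Icc k) (S := {j : Fin n | k ≤ (j : ℕ)})
    ⟨⟨k, hk⟩, by simp⟩ (c := 1) (by simp [stepProfile])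
  rwa [Fin.card_filter_le_val hk.le, Nat.cast_sub hk.le, sub_div, div_self hn,
    sub_sub_cancel] at this

theorem abs_owa_stepProfile_le {w : Fin n → ℝ} (hf : ProportionallyFair (owa w))
    {k : ℕ} (hk0 : 0 < k) (hk : k ≤ n) : |owa w (stepProfile n k)| ≤ 1 - k / n := by
  simpa [Fin.card_filter_val_lt, hk] using
    hf.abs_sub_le_of_eqOn (stepProfile_mem_Icc k) (S := {j : Fin n | (j : ℕ) < k})
      ⟨⟨0, hk0.trans_le hk⟩, by simp [hk0]⟩ (c := 0) (by simp +contextual [stepProfile])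

theorem owa_stepProfile {w : Fin n → ℝ} (hf : ProportionallyFair (owa w)) {k : ℕ} (hk : k ≤ n) :
    owa w (stepProfile n k) = (n - k) / n := by
  rcases hk.eq_or_lt with hkn | hk
  · simp [owa, hkn, stepProfile_self]
  have hn : (n : ℝ) ≠ 0 := by exact_mod_cast (k.zero_le.trans_lt hk).ne'
  have hones := abs_le.mp (hf.abs_one_sub_owa_stepProfile_le hk)
  rw [sub_div, div_self hn]
  rcases k.eq_zero_or_pos with rfl | hk0
  -- for `k = 0` the coalition of the ones is everybody, so its bound is already an equality
  · simp only [Nat.cast_zero, zero_div, neg_zero] at hones ⊢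
    linarith [hones.1, hones.2]
  · linarith [hones.1, (abs_le.mp (hf.abs_owa_stepProfile_le hk0 hk.le)).2]

theorem eq_average {w : Fin n → ℝ} (hf : ProportionallyFair (owa w)) (j : Fin n) :
    w j = 1 / n := by
  have hn : (n : ℝ) ≠ 0 := by exact_mod_cast (Fin.pos j).ne'
  rw [← owa_stepProfile_sub_owa_stepProfile_succ w j, hf.owa_stepProfile j.is_lt.le,
    hf.owa_stepProfile j.is_lt]
  push_cast
  field_simp
  ring

end ProportionallyFair

theorem proportionallyFair_owa_average (n : ℕ) :
    ProportionallyFair (owa fun _ : Fin n => 1 / (n : ℝ)) := fun _ hx _ hS _ hi => by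
  rw [owa_const_weights, one_div_mul_eq_div]
  exact abs_sub_average_le hx hS hi

theorem owa_PF_iff_average_general {n : ℕ} (w : Fin n → ℝ) :
    (∀ x : Fin n → ℝ, (∀ j, x j ∈ Set.Icc (0:ℝ) 1) →
        ∀ S : Finset (Fin n), ∀ hS : S.Nonempty, ∀ i ∈ S,
          |x i - owa w x| ≤ 1 - (S.card : ℝ) / n + (S.sup' hS x - S.inf' hS x)) ↔
      ∀ j, w j = 1 / n := by
  refine ⟨ProportionallyFair.eq_average, fun hw => ?_⟩
  rw [funext hw]
  exact proportionallyFair_owa_average n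

theorem owa_PF_iff_average {n : ℕ} (hn : 0 < n)
    (w : Fin n → ℝ) (hw : ∀ j, w j ∈ Set.Icc (0:ℝ) 1) (hsum : ∑ j, w j = 1) :
    (∀ x : Fin n → ℝ, (∀ j, x j ∈ Set.Icc (0:ℝ) 1) →
        ∀ S : Finset (Fin n), ∀ hS : S.Nonempty, ∀ i ∈ S,
          |x i - owa w x| ≤ 1 - (S.card : ℝ) / n + (S.sup' hS x - S.inf' hS x)) ↔
      ∀ j, w j = 1 / n :=
  owa_PF_iff_average_general w
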